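/- Fix integers n ≥ 2 and d ≥ 2, and consider the system F of n+1 tropical polynomials over ℝ∞ in the n+1 variables x_1, …, x_n, y given by f_1 = min(x_1 + y, 0); f_{i+1} = min(d·x_i, x_{i+1}) for 1 ≤ i ≤ n−1; and f_{n+1} = min(d·x_{n−1}, 1 + x_n). Then F has no root in ℝ∞^{n+1}, yet the non-homogeneous Macaulay tropical linear system M_N ⊙ (0, z) of F with N = d^{n−1} − 1 has a solution. -/

import Mathlib

open scoped Classical

/-- Exponent vectors in `n` variables. -/
abbrev Exp (n : ℕ) : Type := Fin n → ℕ

/-- The total degree `|I|` of an exponent vector. -/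
def expDeg {n : ℕ} (I : Exp n) : ℕ := ∑ j, I j

/-- A tropical polynomial: a finite nonempty support of exponent vectors
together with real coefficients. -/
structure TropPoly (n : ℕ) where
  supp : Finset (Exp n)
  supp_nonempty : supp.Nonempty
  coeff : Exp n → ℝ

/-- The degree of a tropical polynomial. -/
def TropPoly.deg {n : ℕ} (f : TropPoly n) : ℕ := f.supp.sup expDeg

/-- Value of the monomial of `f` with exponent `I` at a point of `ℝ^n`. -/
def TropPoly.mono {n : ℕ} (f : TropPoly n) (I : Exp n) (a : Fin n → ℝ) : ℝ :=
  f.coeff I + ∑ j, (I j : ℝ) * a j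

/-- Value of a tropical polynomial at a point of `ℝ^n`. -/
def TropPoly.eval {n : ℕ} (f : TropPoly n) (a : Fin n → ℝ) : ℝ :=
  f.supp.inf' f.supp_nonempty (fun I => f.mono I a)

/-- A point of `ℝ^n` is a root if the minimum is attained at two distinct monomials. -/
def TropPoly.IsRoot {n : ℕ} (f : TropPoly n) (a : Fin n → ℝ) : Prop :=
  ∃ I ∈ f.supp, ∃ J ∈ f.supp, I ≠ J ∧
    f.mono I a = f.eval a ∧ f.mono J a = f.eval a

/-- Value of the monomial of `f` with exponent `I` at a point of `ℝ∞^n`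
(with the convention `0 • ⊤ = 0`). -/
noncomputable def TropPoly.monoT {n : ℕ} (f : TropPoly n) (I : Exp n)
    (a : Fin n → WithTop ℝ) : WithTop ℝ :=
  (f.coeff I : WithTop ℝ) + ∑ j, (I j) • a j

/-- Value of a tropical polynomial at a point of `ℝ∞^n`. -/
noncomputable def TropPoly.evalT {n : ℕ} (f : TropPoly n) (a : Fin n → WithTop ℝ) : WithTop ℝ :=
  f.supp.inf (fun I => f.monoT I a)

/-- A point of `ℝ∞^n` is a root if the minimum is `+∞` or is attained at two
distinct monomials. -/
noncomputable def TropPoly.IsRootT {n : ℕ} (f : TropPoly n) (a : Fin n → WithTop ℝ) : Prop :=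
  f.evalT a = ⊤ ∨ ∃ I ∈ f.supp, ∃ J ∈ f.supp, I ≠ J ∧
    f.monoT I a = f.evalT a ∧ f.monoT J a = f.evalT a

/-- The coefficient of the monomial `x^I` in `x^J ⊙ f`, which is `+∞`
unless `I - J` belongs to the support of `f`. -/
noncomputable def shiftCoeff {n : ℕ} (f : TropPoly n) (J I : Exp n) : WithTop ℝ :=
  if J ≤ I ∧ I - J ∈ f.supp then (f.coeff (I - J) : WithTop ℝ) else ⊤

/-- The entry `c_{f}(I-J) + y_I` of the Macaulay system. -/
noncomputable def macVal {n : ℕ} (f : TropPoly n) (J : Exp n)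
    (y : Exp n → WithTop ℝ) (I : Exp n) : WithTop ℝ :=
  shiftCoeff f J I + y I

/-- `y` is a solution of the Macaulay tropical linear system of `F` over `ℝ∞`:
for every `j` and every `J` with `|J| + deg f_j ≤ N`, the minimum over all `I` with
`|I| ≤ N` of `c_{f_j}(I-J) + y_I` either equals `+∞` or is attained for at least two
distinct `I`. -/
noncomputable def IsMacaulaySolT {n k : ℕ} (F : Fin k → TropPoly n) (N : ℕ)
    (y : Exp n → WithTop ℝ) : Prop :=
  ∀ j : Fin k, ∀ J : Exp n, expDeg J + (F j).deg ≤ N →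
    (∀ I : Exp n, expDeg I ≤ N → macVal (F j) J y I = ⊤) ∨
    ∃ I₁ I₂ : Exp n, I₁ ≠ I₂ ∧ expDeg I₁ ≤ N ∧ expDeg I₂ ≤ N ∧
      macVal (F j) J y I₁ = macVal (F j) J y I₂ ∧
      ∀ I : Exp n, expDeg I ≤ N → macVal (F j) J y I₁ ≤ macVal (F j) J y I

/-- The system `f_1 = min(x_1 + y, 0)`, `f_{i+1} = min(d·x_i, x_{i+1})` for
`1 ≤ i ≤ n-1`, and `f_{n+1} = min(d·x_{n-1}, 1 + x_n)`, as a family of `n+1` tropical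
polynomials in the `n+1` variables `x_1, …, x_n, y` (the variable `y` having index `n`).
-/
noncomputable def lbSysInf (n d : ℕ) (hn : 2 ≤ n) : Fin (n + 1) → TropPoly (n + 1) :=
  fun j =>
  if h0 : j.val = 0 then
    { supp := {Pi.single (⟨0, by omega⟩ : Fin (n + 1)) 1 +
                 Pi.single (⟨n, by omega⟩ : Fin (n + 1)) 1, 0},
      supp_nonempty := Finset.insert_nonempty _ _,
      coeff := fun _ => 0 }
  else if hjn : j.val = n then
    { supp := {Pi.single (⟨n - 2, by omega⟩ : Fin (n + 1)) d,
               Pi.single (⟨n - 1, by omega⟩ : Fin (n + 1)) 1},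
      supp_nonempty := Finset.insert_nonempty _ _,
      coeff := fun I => if I = Pi.single (⟨n - 1, by omega⟩ : Fin (n + 1)) 1 then 1 else 0 }
  else
    { supp := {Pi.single (⟨j.val - 1, by have := j.isLt; omega⟩ : Fin (n + 1)) d,
               Pi.single (⟨j.val, by have := j.isLt; omega⟩ : Fin (n + 1)) 1},
      supp_nonempty := Finset.insert_nonempty _ _,
      coeff := fun _ => 0 }

/-!
A root `a` of the system is finite: `f_1` forces `a_{x_1} + a_y = 0`, and the equations
`d·a_{x_i} = a_{x_{i+1}}` coming from `f_2, …, f_n` propagate finiteness. Then `f_{n+1}` gives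
`a_{x_n} = d·a_{x_{n-1}} = 1 + a_{x_n}`, which is impossible.

For the Macaulay system, grade the monomial `x^I y^k` by `w = ∑ d^{i-1} I_i - k`. Each of
`f_1, …, f_n` is `w`-homogeneous with equal coefficients, so the vector that is `0` on the
monomials of weight `0` and `+∞` elsewhere ties the two finite entries of each of their
rows. Both monomials of `f_{n+1}` have weight `d^{n-1}`, whereas a shift `J` of degree
`< N = d^{n-1} - 1` has weight `> -d^{n-1}`; so every row of `f_{n+1}` is identically `+∞`.
-/

namespace TropPoly

variable {m : ℕ}

lemma monoT_single (f : TropPoly m) (i : Fin m) (c : ℕ) (a : Fin m → WithTop ℝ) :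
    f.monoT (Pi.single i c) a = f.coeff (Pi.single i c) + c • a i := by
  simp [monoT, Pi.single_apply]

lemma monoT_eq_of_isRootT_of_supp_eq_pair {f : TropPoly m} {s₁ s₂ : Exp m}
    (hf : f.supp = {s₁, s₂}) {a : Fin m → WithTop ℝ} (h : f.IsRootT a) :
    f.monoT s₁ a = f.monoT s₂ a := by
  rcases h with htop | ⟨I, hI, J, hJ, hIJ, hIa, hJa⟩
  · rw [evalT, hf, Finset.inf_insert, Finset.inf_singleton, inf_eq_top_iff] at htop
    rw [htop.1, htop.2]
  · rw [hf, Finset.mem_insert, Finset.mem_singleton] at hI hJ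
    rcases hI with rfl | rfl <;> rcases hJ with rfl | rfl <;> first | exact absurd rfl hIJ | simp_all

end TropPoly

section Macaulay

variable {m : ℕ}

lemma shiftCoeff_add_left (f : TropPoly m) (J : Exp m) {s : Exp m} (hs : s ∈ f.supp) :
    shiftCoeff f J (J + s) = f.coeff s := by
  rw [shiftCoeff, add_tsub_cancel_left, if_pos ⟨le_add_right le_rfl, hs⟩]

lemma shiftCoeff_eq_top (f : TropPoly m) {J I : Exp m} (hI : ∀ s ∈ f.supp, I ≠ J + s) :
    shiftCoeff f J I = ⊤ := by
  rw [shiftCoeff, if_neg]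
  rintro ⟨hJI, hs⟩
  exact hI _ hs (add_tsub_cancel_of_le hJI).symm

def MacaulayRowHolds (f : TropPoly m) (N : ℕ) (J : Exp m) (y : Exp m → WithTop ℝ) : Prop :=
  (∀ I : Exp m, expDeg I ≤ N → macVal f J y I = ⊤) ∨
    ∃ I₁ I₂ : Exp m, I₁ ≠ I₂ ∧ expDeg I₁ ≤ N ∧ expDeg I₂ ≤ N ∧
      macVal f J y I₁ = macVal f J y I₂ ∧
      ∀ I : Exp m, expDeg I ≤ N → macVal f J y I₁ ≤ macVal f J y I

lemma isMacaulaySolT_iff {k : ℕ} {F : Fin k → TropPoly m} {N : ℕ} {y : Exp m → WithTop ℝ} :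
    IsMacaulaySolT F N y ↔
      ∀ j J, expDeg J + (F j).deg ≤ N → MacaulayRowHolds (F j) N J y :=
  Iff.rfl

lemma expDeg_add (I J : Exp m) : expDeg (I + J) = expDeg I + expDeg J := by
  simp [expDeg, Finset.sum_add_distrib]

lemma expDeg_single (i : Fin m) (c : ℕ) : expDeg (Pi.single i c) = c := by
  simp [expDeg]

lemma apply_le_expDeg (I : Exp m) (i : Fin m) : I i ≤ expDeg I :=
  Finset.single_le_sum (fun _ _ => Nat.zero_le _) (Finset.mem_univ i)

lemma expDeg_le_deg {f : TropPoly m} {s : Exp m} (hs : s ∈ f.supp) : expDeg s ≤ f.deg :=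
  Finset.le_sup hs

lemma macaulayRowHolds_of_supp_eq_pair {f : TropPoly m} {s₁ s₂ : Exp m}
    (hf : f.supp = {s₁, s₂}) (hs : s₁ ≠ s₂) {N : ℕ} {J : Exp m} (hJ : expDeg J + f.deg ≤ N)
    {y : Exp m → WithTop ℝ}
    (htie : (f.coeff s₁ : WithTop ℝ) + y (J + s₁) = f.coeff s₂ + y (J + s₂)) :
    MacaulayRowHolds f N J y := by
  have hmem₁ : s₁ ∈ f.supp := by simp [hf]
  have hmem₂ : s₂ ∈ f.supp := by simp [hf]
  have hval : macVal f J y (J + s₁) = macVal f J y (J + s₂) := by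
    rw [macVal, macVal, shiftCoeff_add_left f J hmem₁, shiftCoeff_add_left f J hmem₂, htie]
  refine Or.inr ⟨J + s₁, J + s₂, fun h => hs (add_left_cancel h), ?_, ?_, hval, fun I _ => ?_⟩
  · rw [expDeg_add]; linarith [expDeg_le_deg hmem₁]
  · rw [expDeg_add]; linarith [expDeg_le_deg hmem₂]
  by_cases h₁ : I = J + s₁
  · rw [h₁]
  by_cases h₂ : I = J + s₂
  · rw [h₂, hval]
  have hI : macVal f J y I = ⊤ := by
    rw [macVal, shiftCoeff_eq_top f (by simp [hf, h₁, h₂]), top_add]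
  exact hI ▸ le_top

end Macaulay

lemma Pi.single_ne_single_one {m : ℕ} {i j : Fin m} (hij : i ≠ j) (c : ℕ) :
    (Pi.single i c : Exp m) ≠ Pi.single j 1 := fun h => by
  simpa [Pi.single_apply, hij.symm] using congrFun h j

section LowerBoundSystem

variable {n d : ℕ} (hn : 2 ≤ n)

lemma lbSysInf_zero :
    lbSysInf n d hn ⟨0, by omega⟩ =
      ⟨{Pi.single ⟨0, by omega⟩ 1 + Pi.single (Fin.last n) 1, 0},
        Finset.insert_nonempty _ _, fun _ => 0⟩ :=
  rfl

lemma lbSysInf_succ {m : ℕ} (hm : m + 1 < n) :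
    lbSysInf n d hn ⟨m + 1, by omega⟩ =
      ⟨{Pi.single ⟨m, by omega⟩ d, Pi.single ⟨m + 1, by omega⟩ 1},
        Finset.insert_nonempty _ _, fun _ => 0⟩ := by
  rw [lbSysInf, dif_neg m.succ_ne_zero, dif_neg (show m + 1 ≠ n by omega)]
  rfl

lemma lbSysInf_last :
    lbSysInf n d hn (Fin.last n) =
      ⟨{Pi.single ⟨n - 2, by omega⟩ d, Pi.single ⟨n - 1, by omega⟩ 1},
        Finset.insert_nonempty _ _,
        fun I => if I = Pi.single ⟨n - 1, by omega⟩ 1 then 1 else 0⟩ := by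
  rw [lbSysInf, dif_neg (by simp; omega), dif_pos (show (Fin.last n : ℕ) = n from rfl)]

variable {a : Fin (n + 1) → WithTop ℝ}

lemma add_eq_zero_of_isRootT_lbSysInf_zero (h : (lbSysInf n d hn ⟨0, by omega⟩).IsRootT a) :
    a ⟨0, by omega⟩ + a (Fin.last n) = 0 := by
  have := TropPoly.monoT_eq_of_isRootT_of_supp_eq_pair (by rw [lbSysInf_zero]) h
  rw [lbSysInf_zero] at this
  simpa [TropPoly.monoT, Pi.single_apply, add_nsmul, Finset.sum_add_distrib] using this

lemma nsmul_eq_of_isRootT_lbSysInf_succ {m : ℕ} (hm : m + 1 < n)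
    (h : (lbSysInf n d hn ⟨m + 1, by omega⟩).IsRootT a) :
    d • a ⟨m, by omega⟩ = a ⟨m + 1, by omega⟩ := by
  have := TropPoly.monoT_eq_of_isRootT_of_supp_eq_pair (by rw [lbSysInf_succ hn hm]) h
  rw [lbSysInf_succ hn hm] at this
  simpa [TropPoly.monoT_single] using this

lemma nsmul_eq_one_add_of_isRootT_lbSysInf_last (h : (lbSysInf n d hn (Fin.last n)).IsRootT a) :
    d • a ⟨n - 2, by omega⟩ = 1 + a ⟨n - 1, by omega⟩ := by
  have := TropPoly.monoT_eq_of_isRootT_of_supp_eq_pair (by rw [lbSysInf_last]) h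
  rw [lbSysInf_last] at this
  have hne := Pi.single_ne_single_one (Fin.ne_of_val_ne (by simp; omega) :
    (⟨n - 2, by omega⟩ : Fin (n + 1)) ≠ ⟨n - 1, by omega⟩) d
  simpa [TropPoly.monoT_single, hne] using this

theorem not_exists_isRootT_lbSysInf :
    ¬ ∃ a : Fin (n + 1) → WithTop ℝ, ∀ j, (lbSysInf n d hn j).IsRootT a := by
  rintro ⟨a, ha⟩
  have hfinite : ∀ k (hk : k < n), a ⟨k, by omega⟩ ≠ ⊤ := by
    intro k
    induction k with
    | zero =>
      intro _ htop
      have := add_eq_zero_of_isRootT_lbSysInf_zero hn (ha _)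
      rw [htop, top_add] at this
      exact WithTop.top_ne_zero this
    | succ k ih =>
      intro hk
      rw [← nsmul_eq_of_isRootT_lbSysInf_succ hn hk (ha _)]
      lift a ⟨k, by omega⟩ to ℝ using ih (by omega) with r
      rw [← WithTop.coe_nsmul]
      exact WithTop.coe_ne_top
  have hchain := nsmul_eq_of_isRootT_lbSysInf_succ hn (m := n - 2) (by omega) (ha _)
  have hlast := nsmul_eq_one_add_of_isRootT_lbSysInf_last hn (ha (Fin.last n))
  rw [hchain, show (⟨n - 2 + 1, _⟩ : Fin (n + 1)) = ⟨n - 1, by omega⟩ from Fin.ext (by simp; omega)]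
    at hlast
  lift a ⟨n - 1, by omega⟩ to ℝ using hfinite (n - 1) (by omega) with r
  norm_cast at hlast
  linarith

end LowerBoundSystem

section LowerBoundSolution

variable {n d : ℕ}

def lbWeight (n d : ℕ) (i : Fin (n + 1)) : ℕ := if (i : ℕ) < n then d ^ (i : ℕ) else 0

/-- `I ⬝ᵥ lbWeight n d - I (Fin.last n)` is the weight `w` of `x^I` described above. -/
noncomputable def lbSol (n d : ℕ) (I : Exp (n + 1)) : WithTop ℝ :=
  if I ⬝ᵥ lbWeight n d = I (Fin.last n) then 0 else ⊤

lemma lbSol_zero : lbSol n d 0 = 0 := by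
  simp [lbSol]

lemma lbSol_add_single (J : Exp (n + 1)) {i : Fin (n + 1)} (hi : (i : ℕ) < n) (c : ℕ) :
    lbSol n d (J + Pi.single i c) =
      if J ⬝ᵥ lbWeight n d + c * d ^ (i : ℕ) = J (Fin.last n) then 0 else ⊤ := by
  have hne : Fin.last n ≠ i := fun h => by simp [← h] at hi
  simp [lbSol, add_dotProduct, lbWeight, hi, hne]

variable (hn : 2 ≤ n)

lemma lbSol_add_x₀_add_y (J : Exp (n + 1)) :
    lbSol n d (J + (Pi.single ⟨0, by omega⟩ 1 + Pi.single (Fin.last n) 1)) = lbSol n d J := by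
  simp [lbSol, add_dotProduct, lbWeight, Fin.ext_iff, (show 0 < n by omega),
    (show n ≠ 0 by omega)]

variable {J : Exp (n + 1)}

lemma macaulayRowHolds_lbSysInf_zero {N : ℕ}
    (hJ : expDeg J + (lbSysInf n d hn ⟨0, by omega⟩).deg ≤ N) :
    MacaulayRowHolds (lbSysInf n d hn ⟨0, by omega⟩) N J (lbSol n d) := by
  have hne : (Pi.single ⟨0, by omega⟩ 1 + Pi.single (Fin.last n) 1 : Exp (n + 1)) ≠ 0 :=
    fun h => by simpa using congrFun h (Fin.last n)
  refine macaulayRowHolds_of_supp_eq_pair (by rw [lbSysInf_zero]) hne hJ ?_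
  rw [lbSysInf_zero, add_zero, lbSol_add_x₀_add_y hn]

lemma macaulayRowHolds_lbSysInf_succ {m N : ℕ} (hm : m + 1 < n)
    (hJ : expDeg J + (lbSysInf n d hn ⟨m + 1, by omega⟩).deg ≤ N) :
    MacaulayRowHolds (lbSysInf n d hn ⟨m + 1, by omega⟩) N J (lbSol n d) := by
  have hne := Pi.single_ne_single_one (Fin.ne_of_val_ne (by simp) :
    (⟨m, by omega⟩ : Fin (n + 1)) ≠ ⟨m + 1, by omega⟩) d
  refine macaulayRowHolds_of_supp_eq_pair (by rw [lbSysInf_succ hn hm]) hne hJ ?_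
  simp only [lbSysInf_succ hn hm, WithTop.coe_zero, zero_add]
  rw [lbSol_add_single J (by simp; omega), lbSol_add_single J (by simp; omega), pow_succ']
  simp

lemma macaulayRowHolds_lbSysInf_last
    (hJ : expDeg J + (lbSysInf n d hn (Fin.last n)).deg ≤ d ^ (n - 1) - 1) :
    MacaulayRowHolds (lbSysInf n d hn (Fin.last n)) (d ^ (n - 1) - 1) J (lbSol n d) := by
  have hne := Pi.single_ne_single_one (Fin.ne_of_val_ne (by simp; omega) :
    (⟨n - 2, by omega⟩ : Fin (n + 1)) ≠ ⟨n - 1, by omega⟩) d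
  have hdeg : expDeg (Pi.single (⟨n - 1, by omega⟩ : Fin (n + 1)) 1) ≤
      (lbSysInf n d hn (Fin.last n)).deg :=
    expDeg_le_deg (by rw [lbSysInf_last]; simp)
  rw [expDeg_single] at hdeg
  have hy : J (Fin.last n) < d ^ (n - 1) := by
    have := apply_le_expDeg J (Fin.last n)
    omega
  have hpow : d * d ^ (n - 2) = d ^ (n - 1) := by rw [← pow_succ']; congr 1; omega
  refine macaulayRowHolds_of_supp_eq_pair (by rw [lbSysInf_last]) hne hJ ?_
  rw [lbSol_add_single J (by simp; omega), lbSol_add_single J (by simp; omega), if_neg (by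
    simp only [hpow]; omega), if_neg (by simp; omega)]
  simp

theorem isMacaulaySolT_lbSol :
    IsMacaulaySolT (lbSysInf n d hn) (d ^ (n - 1) - 1) (lbSol n d) := by
  rw [isMacaulaySolT_iff]
  rintro ⟨_ | m, hj⟩ J hJ
  · exact macaulayRowHolds_lbSysInf_zero hn hJ
  rcases (show m + 1 < n ∨ m + 1 = n by omega) with hm | hm
  · exact macaulayRowHolds_lbSysInf_succ hn hm hJ
  · rw [show (⟨m + 1, hj⟩ : Fin (n + 1)) = Fin.last n from Fin.ext hm] at hJ ⊢
    exact macaulayRowHolds_lbSysInf_last hn hJ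

end LowerBoundSolution

theorem tropical_nullstellensatz_lower_bound_inf_general (n d : ℕ) (hn : 2 ≤ n) :
    (¬ ∃ a : Fin (n + 1) → WithTop ℝ, ∀ j : Fin (n + 1), (lbSysInf n d hn j).IsRootT a) ∧
    (∃ y : Exp (n + 1) → WithTop ℝ, y 0 = 0 ∧
      IsMacaulaySolT (lbSysInf n d hn) (d ^ (n - 1) - 1) y) :=
  ⟨not_exists_isRootT_lbSysInf hn, lbSol n d, lbSol_zero, isMacaulaySolT_lbSol hn⟩

/-- **Lower bound over ℝ∞** : for all `n, d ≥ 2` the system `F = lbSysInf n d` of `n+1`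
tropical polynomials of degree at most `d` in `n+1` variables has no root in `ℝ∞^{n+1}`,
yet its non-homogeneous Macaulay tropical linear system `M_N ⊙ (0, z)` with
`N = d^{n-1} - 1` has a solution. -/
theorem tropical_nullstellensatz_lower_bound_inf (n d : ℕ) (hn : 2 ≤ n) (hd : 2 ≤ d) :
    (¬ ∃ a : Fin (n + 1) → WithTop ℝ, ∀ j : Fin (n + 1), (lbSysInf n d hn j).IsRootT a) ∧
    (∃ y : Exp (n + 1) → WithTop ℝ, y 0 = 0 ∧
      IsMacaulaySolT (lbSysInf n d hn) (d ^ (n - 1) - 1) y) :=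
  tropical_nullstellensatz_lower_bound_inf_general n d hn
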